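/- arXiv:2011.04478 — 2 statements merged into one kernel-verified Lean document; each statement's English description precedes it below -/
import Mathlib

section
/- Let p ∈ ℕ, let α₁ > α₂ > ⋯ > α_p be distinct real numbers, and let m₁,…,m_p be positive integers with Σ m_i = k. If (ξ₁,…,ξ_k) ∈ ℝ^k is nonzero, then the function F(z) = Σ_{ℓ=1}^p P_ℓ(z) e^{α_ℓ z}, where P_ℓ is the polynomial of degree < m_ℓ with coefficients given by the ℓ-th block of ξ, has at most k − 1 distinct real roots. -/
/-!
Induction on `k = Σ m_ℓ`. Dividing `F` by `exp (α ℓ₀ z)` for some `ℓ₀` with `P ℓ₀ ≠ 0` does not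
change its zeros and turns the `ℓ₀`-th term into the polynomial `P ℓ₀`. Differentiating kills one
degree of `P ℓ₀` and keeps the degree of every other `P ℓ`, because its exponent is now nonzero;
so the derivative is an exponential polynomial of the same shape with total size `k - 1`, and by
Rolle's theorem it has at least `#zeros - 1` zeros. The derivative can only vanish identically
when `F` is a nonzero multiple of `exp (α ℓ₀ z)`, which has no zeros at all.
-/

open Polynomial Finset Function

namespace Polynomial

variable {R : Type*} [Semiring R]

theorem degree_derivative_lt_pred {p : R[X]} {n : ℕ} (h : p.degree < n) :
    (derivative p).degree < (n - 1 : ℕ) := by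
  rw [degree_lt_iff_coeff_zero] at h ⊢
  intro m hm
  rw [coeff_derivative, h (m + 1) (by omega), zero_mul]

theorem degree_derivative_add_C_mul [NoZeroDivisors R] (p : R[X]) {b : R} (hb : b ≠ 0) :
    (derivative p + C b * p).degree = p.degree := by
  rcases eq_or_ne p 0 with rfl | hp
  · simp
  have hlt : (derivative p).degree < (C b * p).degree := by
    rw [degree_C_mul hb]
    exact degree_derivative_lt hp
  rw [degree_add_eq_right_of_degree_lt hlt, degree_C_mul hb]

theorem coeff_sum_fin_C_mul_X_pow {n : ℕ} (f : Fin n → R) (j : Fin n) :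
    (∑ i : Fin n, C (f i) * X ^ (i : ℕ)).coeff j = f j := by
  simp [Fin.val_inj]

end Polynomial

theorem exists_finset_deriv_eq_zero_card_le_add_one {f : ℝ → ℝ} (hf : Continuous f)
    {s : Finset ℝ} (hs : ∀ x ∈ s, f x = 0) :
    ∃ t : Finset ℝ, (∀ x ∈ t, deriv f x = 0) ∧ #s ≤ #t + 1 := by
  classical
  have rolle : ∀ x ∈ s, ∀ y ∈ s, x < y → ∃ z ∈ Set.Ioo x y, deriv f z = 0 :=
    fun x hx y hy hxy => exists_deriv_eq_zero hxy hf.continuousOn (by rw [hs x hx, hs y hy])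
  choose! c hc using rolle
  refine ⟨{q ∈ s ×ˢ s | q.1 < q.2}.image fun q => c q.1 q.2, ?_, ?_⟩
  · simp only [mem_image, mem_filter, mem_product]
    rintro _ ⟨⟨x, y⟩, ⟨⟨hx, hy⟩, hxy⟩, rfl⟩
    exact (hc x hx y hy hxy).2
  · refine card_le_of_interleaved fun x hx y hy hxy _ => ⟨c x y, ?_, (hc x hx y hy hxy).1⟩
    exact mem_image.mpr ⟨(x, y), by simp [hx, hy, hxy], rfl⟩

section ExpPoly

variable {ι : Type*}

noncomputable def expPolyDeriv (α : ι → ℝ) (P : ι → ℝ[X]) (ℓ : ι) : ℝ[X] :=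
  derivative (P ℓ) + C (α ℓ) * P ℓ

theorem degree_expPolyDeriv {α : ι → ℝ} (P : ι → ℝ[X]) {ℓ : ι} (hα : α ℓ ≠ 0) :
    (expPolyDeriv α P ℓ).degree = (P ℓ).degree :=
  degree_derivative_add_C_mul _ hα

theorem expPolyDeriv_of_eq_zero {α : ι → ℝ} (P : ι → ℝ[X]) {ℓ : ι} (hα : α ℓ = 0) :
    expPolyDeriv α P ℓ = derivative (P ℓ) := by
  simp [expPolyDeriv, hα]

variable [Fintype ι]

noncomputable def expPoly (α : ι → ℝ) (P : ι → ℝ[X]) (z : ℝ) : ℝ :=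
  ∑ ℓ, (P ℓ).eval z * Real.exp (α ℓ * z)

theorem hasDerivAt_expPoly (α : ι → ℝ) (P : ι → ℝ[X]) (z : ℝ) :
    HasDerivAt (expPoly α P) (expPoly α (expPolyDeriv α P) z) z := by
  have hterm (ℓ : ι) : HasDerivAt (fun z => (P ℓ).eval z * Real.exp (α ℓ * z))
      ((expPolyDeriv α P ℓ).eval z * Real.exp (α ℓ * z)) z := by
    refine (((P ℓ).hasDerivAt z).fun_mul ((hasDerivAt_id' z).const_mul (α ℓ)).exp).congr_deriv ?_
    simp only [expPolyDeriv, eval_add, eval_mul, eval_C]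
    ring
  exact HasDerivAt.fun_sum fun ℓ _ => hterm ℓ

theorem expPoly_sub_const (α : ι → ℝ) (P : ι → ℝ[X]) (c z : ℝ) :
    expPoly (fun ℓ => α ℓ - c) P z = Real.exp (-(c * z)) * expPoly α P z := by
  simp only [expPoly, mul_sum]
  refine sum_congr rfl fun ℓ _ => ?_
  rw [mul_left_comm, ← Real.exp_add]
  ring_nf

/-- Here `P ℓ₀` is a nonzero constant and every other `P ℓ` vanishes. -/
theorem expPoly_ne_zero_of_expPolyDeriv_eq_zero {α : ι → ℝ} (hα : Injective α) {P : ι → ℝ[X]}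
    {ℓ₀ : ι} (hα₀ : α ℓ₀ = 0) (hP₀ : P ℓ₀ ≠ 0) (hD : expPolyDeriv α P = 0) (z : ℝ) :
    expPoly α P z ≠ 0 := by
  have hP : ∀ ℓ ≠ ℓ₀, P ℓ = 0 := fun ℓ hℓ => by
    have h := degree_expPolyDeriv P (α := α) (hα₀ ▸ hα.ne hℓ)
    rwa [hD, Pi.zero_apply, degree_zero, eq_comm, degree_eq_bot] at h
  have hconst := eq_C_of_derivative_eq_zero (by
    rw [← expPolyDeriv_of_eq_zero P hα₀, hD, Pi.zero_apply])
  have hc : (P ℓ₀).coeff 0 ≠ 0 := fun h => hP₀ (by rw [hconst, h, map_zero])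
  rw [expPoly, sum_eq_single ℓ₀ (fun ℓ _ hℓ => by rw [hP ℓ hℓ, eval_zero, zero_mul])
    (fun h => absurd (mem_univ ℓ₀) h), hconst, eval_C, hα₀, zero_mul, Real.exp_zero, mul_one]
  exact hc

theorem card_lt_sum_of_expPoly_eq_zero {α : ι → ℝ} (hα : Injective α) {P : ι → ℝ[X]}
    (hP : P ≠ 0) {d : ι → ℕ} (hd : ∀ ℓ, (P ℓ).degree < d ℓ) {s : Finset ℝ}
    (hs : ∀ z ∈ s, expPoly α P z = 0) : #s < ∑ ℓ, d ℓ := by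
  classical
  induction hn : ∑ ℓ, d ℓ using Nat.strong_induction_on generalizing α P d s with
  | _ n ih =>
  obtain ⟨ℓ₀, hℓ₀⟩ := Function.ne_iff.mp hP
  have hd₀ : 1 ≤ d ℓ₀ := by
    exact_mod_cast (zero_le_degree_iff.mpr hℓ₀).trans_lt (hd ℓ₀)
  have hn₀ : d ℓ₀ ≤ n := hn ▸ single_le_sum (fun _ _ => Nat.zero_le _) (mem_univ ℓ₀)
  set β : ι → ℝ := fun ℓ => α ℓ - α ℓ₀
  have hβ : Injective β := fun a b h => hα (sub_left_inj.mp h)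
  have hβ₀ : β ℓ₀ = 0 := sub_self _
  have hH : ∀ z ∈ s, expPoly β P z = 0 := fun z hz => by
    rw [expPoly_sub_const, hs z hz, mul_zero]
  by_cases hQ : expPolyDeriv β P = 0
  · have : s = ∅ := eq_empty_of_forall_notMem fun z hz =>
      expPoly_ne_zero_of_expPolyDeriv_eq_zero hβ hβ₀ hℓ₀ hQ z (hH z hz)
    simp only [this, card_empty]
    omega
  obtain ⟨t, ht, hst⟩ := exists_finset_deriv_eq_zero_card_le_add_one
    (continuous_iff_continuousAt.mpr fun z => (hasDerivAt_expPoly β P z).continuousAt) hH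
  have hd' : ∀ ℓ, (expPolyDeriv β P ℓ).degree < update d ℓ₀ (d ℓ₀ - 1) ℓ := fun ℓ => by
    rcases eq_or_ne ℓ ℓ₀ with rfl | hℓ
    · rw [expPolyDeriv_of_eq_zero P hβ₀, update_self]
      exact degree_derivative_lt_pred (hd ℓ)
    · rw [degree_expPolyDeriv P (hβ₀ ▸ hβ.ne hℓ), update_of_ne hℓ]
      exact hd ℓ
  have hsum : ∑ ℓ, update d ℓ₀ (d ℓ₀ - 1) ℓ + 1 = n := by
    rw [sum_update_of_mem (mem_univ ℓ₀), ← hn,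
      sum_eq_add_sum_sdiff_singleton_of_mem (mem_univ ℓ₀)]
    omega
  have := ih _ (by omega) hβ hQ hd' (fun z hz => (hasDerivAt_expPoly β P z).deriv ▸ ht z hz) rfl
  omega

end ExpPoly

theorem stmt7_general (p : ℕ) (α : Fin p → ℝ) (hα : StrictAnti α)
    (m : Fin p → ℕ) (k : ℕ) (hk : ∑ ℓ, m ℓ = k)
    (ξ : (Σ ℓ : Fin p, Fin (m ℓ)) → ℝ) (hξ : ξ ≠ 0)
    (F : ℝ → ℝ)
    (hF : ∀ z, F z = ∑ ℓ : Fin p,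
      (∑ i : Fin (m ℓ), ξ ⟨ℓ, i⟩ * z ^ (i : ℕ)) * Real.exp (α ℓ * z))
    (s : Finset ℝ) (hs : ∀ z ∈ s, F z = 0) : s.card < k := by
  set P : Fin p → ℝ[X] := fun ℓ => ∑ i : Fin (m ℓ), C (ξ ⟨ℓ, i⟩) * X ^ (i : ℕ)
  have hP : P ≠ 0 := by
    obtain ⟨⟨ℓ, i⟩, hi⟩ := Function.ne_iff.mp hξ
    refine fun h => hi ?_
    rw [← coeff_sum_fin_C_mul_X_pow (fun i => ξ ⟨ℓ, i⟩) i]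
    exact congrArg (coeff · i) (congrFun h ℓ)
  have hFP : F = expPoly α P := funext fun z => by simp [hF, expPoly, P, eval_finsetSum]
  exact hk ▸ card_lt_sum_of_expPoly_eq_zero hα.injective hP (fun ℓ => degree_sum_fin_lt _)
    (hFP ▸ hs)

/-- a nonzero exponential polynomial `F(z) = Σ_ℓ P_ℓ(z) e^{α_ℓ z}` with
distinct exponents `α₁ > ⋯ > α_p` and `deg P_ℓ < m_ℓ` has at most `k - 1` distinct real
roots, where `k = Σ_ℓ m_ℓ`. -/
theorem stmt7 (p : ℕ) (α : Fin p → ℝ) (hα : StrictAnti α)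
    (m : Fin p → ℕ) (hm : ∀ ℓ, 0 < m ℓ) (k : ℕ) (hk : ∑ ℓ, m ℓ = k)
    (ξ : (Σ ℓ : Fin p, Fin (m ℓ)) → ℝ) (hξ : ξ ≠ 0)
    (F : ℝ → ℝ)
    (hF : ∀ z, F z = ∑ ℓ : Fin p,
      (∑ i : Fin (m ℓ), ξ ⟨ℓ, i⟩ * z ^ (i : ℕ)) * Real.exp (α ℓ * z))
    (s : Finset ℝ) (hs : ∀ z ∈ s, F z = 0) : s.card < k :=
  stmt7_general p α hα m k hk ξ hξ F hF s hs
end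

section
/- Fix k ∈ ℕ, integers T₀ < T₁, a subset S ⊆ [[T₀,T₁]], two functions g^t, g^b : [[T₀,T₁]] → [−∞,∞) with g^t(r) ≥ g^b(r) for all r, and vectors x, y ∈ 𝔚_k. Assume Ω_avoid(T₀,T₁,x,y,∞,g^t;S) and Ω_avoid(T₀,T₁,x,y,∞,g^b;S) are both nonempty. Then there exists a probability space supporting Bernoulli line ensembles 𝔏^t, 𝔏^b such that 𝔏^t is uniform on Ω_avoid(T₀,T₁,x,y,∞,g^t;S), 𝔏^b is uniform on Ω_avoid(T₀,T₁,x,y,∞,g^b;S), and almost surely L^t_i(r) ≥ L^b_i(r) for all i ∈ [[1,k]] and r ∈ [[T₀,T₁]]. -/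
/-!
Let `A ⊆ B` be the sets of top and bottom ensembles. Both are closed under pointwise min and max,
and the max of a top ensemble with a bottom one is again a top ensemble. So for `s ⊆ A` the meets
`s ⊼ B` lie in `B` below elements of `s` and the joins `s ⊻ B` lie in `A`, and Daykin's inequality
`#s * #B ≤ #(s ⊼ B) * #(s ⊻ B)` yields Hall's condition for matching each element of `A × Fin #B`
to an element of `B × Fin #A` with smaller first coordinate. Both sides have `#A * #B` elements, so
the matching is a bijection; it carries the uniform measure to the uniform measure, and the first
coordinates on the two sides are the coupled ensembles.
-/

open MeasureTheory
open scoped ENNReal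

/-- `L` is an up-right path on `[[T₀,T₁]]`. -/
def UpRightOn (T₀ T₁ : ℤ) (L : ℤ → ℤ) : Prop :=
  ∀ r : ℤ, T₀ ≤ r → r < T₁ → (L (r + 1) = L r ∨ L (r + 1) = L r + 1)

/-- The set `Ω_avoid(T₀,T₁,x,y,∞,g;S)` of `k`-tuples of up-right paths on `[[T₀,T₁]]`
with entrance data `x` and exit data `y`, weakly ordered and staying above `g` at all
times in `S` (paths are normalized to vanish outside `[[T₀,T₁]]`). -/
def OmegaAvoidS (k : ℕ) (T₀ T₁ : ℤ) (x y : Fin k → ℤ)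
    (g : ℤ → WithBot ℤ) (S : Set ℤ) : Set (Fin k → ℤ → ℤ) :=
  {L | (∀ i, UpRightOn T₀ T₁ (L i)) ∧ (∀ i, L i T₀ = x i) ∧ (∀ i, L i T₁ = y i) ∧
    (∀ r ∈ S, (∀ i j : Fin k, i ≤ j → L j r ≤ L i r) ∧
      ∀ i, g r ≤ (L i r : WithBot ℤ)) ∧
    (∀ i, ∀ r : ℤ, r < T₀ ∨ T₁ < r → L i r = 0)}

open ProbabilityTheory Finset
open scoped FinsetFamily

section MonotoneMatching

variable {α : Type*} [DistribLattice α] {A B : Finset α}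

theorem card_mul_card_le_card_filter_le_mul_card [DecidableEq α] [DecidableLE α]
    (hsup : ∀ a ∈ A, ∀ b ∈ B, a ⊔ b ∈ A) (hinf : ∀ a ∈ A, ∀ b ∈ B, a ⊓ b ∈ B)
    {s : Finset α} (hs : s ⊆ A) : #s * #B ≤ #{b ∈ B | ∃ a ∈ s, b ≤ a} * #A := by
  have hinfs : s ⊼ B ⊆ {b ∈ B | ∃ a ∈ s, b ≤ a} := by
    intro c hc
    obtain ⟨a, ha, b, hb, rfl⟩ := mem_infs.1 hc
    exact mem_filter.2 ⟨hinf a (hs ha) b hb, a, ha, inf_le_left⟩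
  have hsups : s ⊻ B ⊆ A := by
    intro c hc
    obtain ⟨a, ha, b, hb, rfl⟩ := mem_sups.1 hc
    exact hsup a (hs ha) b hb
  calc #s * #B ≤ #(s ⊼ B) * #(s ⊻ B) := le_card_infs_mul_card_sups s B
    _ ≤ #{b ∈ B | ∃ a ∈ s, b ≤ a} * #A := by gcongr

theorem exists_equiv_prod_fin_fst_le
    (hsup : ∀ a ∈ A, ∀ b ∈ B, a ⊔ b ∈ A) (hinf : ∀ a ∈ A, ∀ b ∈ B, a ⊓ b ∈ B) :
    ∃ e : A × Fin #B ≃ B × Fin #A, ∀ p, ((e p).1 : α) ≤ p.1 := by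
  classical
  have hall (S : Finset (A × Fin #B)) :
      #S ≤ #{c : B × Fin #A | ∃ p ∈ S, (c.1 : α) ≤ p.1} := by
    let s := S.image fun p => (p.1 : α)
    have hfibre : ∀ a ∈ s, #{p ∈ S | (p.1 : α) = a} ≤ #B := fun a _ =>
      calc #{p ∈ S | (p.1 : α) = a} ≤ #(univ : Finset (Fin #B)) :=
            card_le_card_of_injOn Prod.snd (fun _ _ => mem_coe.2 (mem_univ _))
              fun p hp q hq hpq => Prod.ext
                (Subtype.ext ((mem_filter.1 hp).2.trans (mem_filter.1 hq).2.symm)) hpq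
        _ = #B := card_fin _
    calc #S ≤ #s * #B := mul_comm #B #s ▸ card_le_mul_card_image S #B hfibre
      _ ≤ #{b ∈ B | ∃ a ∈ s, b ≤ a} * #A :=
        card_mul_card_le_card_filter_le_mul_card hsup hinf fun a ha => by
          obtain ⟨p, -, rfl⟩ := mem_image.1 ha
          exact p.1.2
      _ = #{c : B × Fin #A | ∃ p ∈ S, (c.1 : α) ≤ p.1} := by
        rw [← univ_product_univ, filter_product_left (fun b : B => ∃ p ∈ S, (b : α) ≤ p.1),
          card_product, univ_eq_attach, filter_attach (fun b => ∃ p ∈ S, b ≤ (p.1 : α)),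
          card_map, card_attach]
        simp [s]
  obtain ⟨f, hf, hfle⟩ := (Fintype.all_card_le_filter_rel_iff_exists_injective _).1 hall
  have hcard : Fintype.card (A × Fin #B) = Fintype.card (B × Fin #A) := by simp [mul_comm]
  exact ⟨.ofBijective f ((Fintype.bijective_iff_injective_and_card f).2 ⟨hf, hcard⟩), hfle⟩

end MonotoneMatching

section UniformMeasure

variable {Ω Ω' : Type*} [Fintype Ω] [MeasurableSpace Ω] [MeasurableSingletonClass Ω]
  [Fintype Ω'] [MeasurableSpace Ω'] [MeasurableSingletonClass Ω']

theorem uniformOn_univ_preimage_equiv (e : Ω ≃ Ω') (s : Set Ω') :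
    uniformOn (Set.univ : Set Ω) (e ⁻¹' s) = uniformOn Set.univ s := by
  rw [uniformOn_univ, uniformOn_univ, Measure.count_apply (Set.toFinite _).measurableSet,
    Measure.count_apply (Set.toFinite _).measurableSet,
    Set.encard_preimage_of_injective_subset_range e.injective (by simp), Fintype.card_congr e]

theorem uniformOn_univ_fst_eq {β γ : Type*} [Fintype β] [Fintype γ] [Nonempty γ]
    [MeasurableSpace (β × γ)] [MeasurableSingletonClass (β × γ)] (b : β) :
    uniformOn (Set.univ : Set (β × γ)) {p | p.1 = b} = (Fintype.card β : ℝ≥0∞)⁻¹ := by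
  have hfibre : {p : β × γ | p.1 = b} = {b} ×ˢ Set.univ := by ext; simp
  rw [uniformOn_univ, hfibre, Measure.count_apply (Set.toFinite _).measurableSet,
    Set.encard_prod, Set.encard_singleton, Set.encard_univ, one_mul, Fintype.card_prod]
  have hγ : (Fintype.card γ : ℝ≥0∞) ≠ 0 := by simp
  rw [ENat.card_eq_coe_fintype_card, ENat.toENNReal_coe, Nat.cast_mul,
    ENNReal.div_eq_inv_mul, ENNReal.mul_inv (by simp) (Or.inr hγ), mul_assoc,
    ENNReal.inv_mul_cancel hγ (by simp), mul_one]

end UniformMeasure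

universe u

theorem exists_monotone_coupling_uniformOn {α : Type u} [DistribLattice α] {A B : Finset α}
    (hA : A.Nonempty) (hB : B.Nonempty)
    (hsup : ∀ a ∈ A, ∀ b ∈ B, a ⊔ b ∈ A) (hinf : ∀ a ∈ A, ∀ b ∈ B, a ⊓ b ∈ B) :
    ∃ (Ω : Type u) (_ : MeasurableSpace Ω) (P : Measure Ω), IsProbabilityMeasure P ∧
      ∃ X Y : Ω → α, (∀ ω, X ω ∈ A) ∧ (∀ a ∈ A, P {ω | X ω = a} = (#A : ℝ≥0∞)⁻¹) ∧
        (∀ ω, Y ω ∈ B) ∧ (∀ b ∈ B, P {ω | Y ω = b} = (#B : ℝ≥0∞)⁻¹) ∧ ∀ ω, Y ω ≤ X ω := by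
  obtain ⟨e, he⟩ := exists_equiv_prod_fin_fst_le hsup hinf
  have : Nonempty A := hA.coe_sort
  have : Nonempty (Fin #A) := ⟨⟨0, hA.card_pos⟩⟩
  have : Nonempty (Fin #B) := ⟨⟨0, hB.card_pos⟩⟩
  let : MeasurableSpace (A × Fin #B) := ⊤
  let : MeasurableSpace (B × Fin #A) := ⊤
  refine ⟨A × Fin #B, ⊤, uniformOn Set.univ, inferInstance, fun ω => ω.1, fun ω => (e ω).1,
    fun ω => ω.1.2, fun a ha => ?_, fun ω => (e ω).1.2, fun b hb => ?_, he⟩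
  · have hfibre : {ω : A × Fin #B | (ω.1 : α) = a} = {ω | ω.1 = ⟨a, ha⟩} := by
      simp only [Subtype.ext_iff]
    rw [hfibre, uniformOn_univ_fst_eq, Fintype.card_coe]
  · have hfibre : {ω | ((e ω).1 : α) = b} = e ⁻¹' {c | c.1 = ⟨b, hb⟩} := by
      simp only [Subtype.ext_iff]; rfl
    rw [hfibre, uniformOn_univ_preimage_equiv, uniformOn_univ_fst_eq, Fintype.card_coe]

section BernoulliLineEnsembles

variable {T₀ T₁ : ℤ}

theorem UpRightOn.sup {L M : ℤ → ℤ} (hL : UpRightOn T₀ T₁ L) (hM : UpRightOn T₀ T₁ M) :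
    UpRightOn T₀ T₁ (L ⊔ M) := fun r h₀ h₁ => by
  have := hL r h₀ h₁
  have := hM r h₀ h₁
  simp only [Pi.sup_apply]
  omega

theorem UpRightOn.inf {L M : ℤ → ℤ} (hL : UpRightOn T₀ T₁ L) (hM : UpRightOn T₀ T₁ M) :
    UpRightOn T₀ T₁ (L ⊓ M) := fun r h₀ h₁ => by
  have := hL r h₀ h₁
  have := hM r h₀ h₁
  simp only [Pi.inf_apply]
  omega

theorem UpRightOn.monotoneOn {L : ℤ → ℤ} (hL : UpRightOn T₀ T₁ L) :
    MonotoneOn L (Set.Icc T₀ T₁) :=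
  monotoneOn_of_le_add_one Set.ordConnected_Icc fun r _ hr hr' => by
    rcases hL r hr.1 (Int.add_one_le_iff.1 hr'.2) with h | h <;> omega

variable {k : ℕ} {x y : Fin k → ℤ} {S : Set ℤ} {g g' : ℤ → WithBot ℤ} {L M : Fin k → ℤ → ℤ}

theorem sup_mem_omegaAvoidS (hL : L ∈ OmegaAvoidS k T₀ T₁ x y g S)
    (hM : M ∈ OmegaAvoidS k T₀ T₁ x y g' S) : L ⊔ M ∈ OmegaAvoidS k T₀ T₁ x y g S := by
  obtain ⟨hL₁, hL₂, hL₃, hL₄, hL₅⟩ := hL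
  obtain ⟨hM₁, hM₂, hM₃, hM₄, hM₅⟩ := hM
  refine ⟨fun i => (hL₁ i).sup (hM₁ i), fun i => ?_, fun i => ?_, fun r hr => ⟨fun i j hij => ?_,
    fun i => (hL₄ r hr).2 i |>.trans (WithBot.coe_le_coe.2 le_sup_left)⟩, fun i r hr => ?_⟩
  · simp [hL₂ i, hM₂ i]
  · simp [hL₃ i, hM₃ i]
  · exact sup_le_sup ((hL₄ r hr).1 i j hij) ((hM₄ r hr).1 i j hij)
  · simp [hL₅ i r hr, hM₅ i r hr]

theorem inf_mem_omegaAvoidS (hL : L ∈ OmegaAvoidS k T₀ T₁ x y g S)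
    (hM : M ∈ OmegaAvoidS k T₀ T₁ x y g S) : L ⊓ M ∈ OmegaAvoidS k T₀ T₁ x y g S := by
  obtain ⟨hL₁, hL₂, hL₃, hL₄, hL₅⟩ := hL
  obtain ⟨hM₁, hM₂, hM₃, hM₄, hM₅⟩ := hM
  refine ⟨fun i => (hL₁ i).inf (hM₁ i), fun i => ?_, fun i => ?_, fun r hr => ⟨fun i j hij => ?_,
    fun i => ?_⟩, fun i r hr => ?_⟩
  · simp [hL₂ i, hM₂ i]
  · simp [hL₃ i, hM₃ i]
  · exact inf_le_inf ((hL₄ r hr).1 i j hij) ((hM₄ r hr).1 i j hij)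
  · simpa [Pi.inf_apply, WithBot.coe_min] using le_min ((hL₄ r hr).2 i) ((hM₄ r hr).2 i)
  · simp [hL₅ i r hr, hM₅ i r hr]

theorem antitone_omegaAvoidS : Antitone fun g => OmegaAvoidS k T₀ T₁ x y g S :=
  fun _ _ hg _ ⟨h₁, h₂, h₃, h₄, h₅⟩ =>
    ⟨h₁, h₂, h₃, fun r hr => ⟨(h₄ r hr).1, fun i => (hg r).trans ((h₄ r hr).2 i)⟩, h₅⟩

theorem omegaAvoidS_finite : (OmegaAvoidS k T₀ T₁ x y g S).Finite := by
  let restrict : (Fin k → ℤ → ℤ) → Fin k → Set.Icc T₀ T₁ → ℤ := fun L i r => L i r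
  refine Set.Finite.of_finite_image (f := restrict) ?_ fun L hL M hM hLM => ?_
  · refine (Set.Finite.pi fun i => Set.Finite.pi fun _ => Set.finite_Icc (x i) (y i)).subset ?_
    rintro _ ⟨L, ⟨hup, hx, hy, -, -⟩, rfl⟩ i - r -
    exact ⟨hx i ▸ (hup i).monotoneOn (Set.left_mem_Icc.2 (r.2.1.trans r.2.2)) r.2 r.2.1,
      hy i ▸ (hup i).monotoneOn r.2 (Set.right_mem_Icc.2 (r.2.1.trans r.2.2)) r.2.2⟩
  · funext i r
    by_cases hr : r ∈ Set.Icc T₀ T₁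
    · exact congr_fun (congr_fun hLM i) ⟨r, hr⟩
    · rw [Set.mem_Icc, not_and_or, not_le, not_le] at hr
      rw [hL.2.2.2.2 i r hr, hM.2.2.2.2 i r hr]

end BernoulliLineEnsembles

theorem stmt14_general (k : ℕ) (T₀ T₁ : ℤ) (S : Set ℤ)
    (gt gb : ℤ → WithBot ℤ) (hg : ∀ r, gb r ≤ gt r)
    (x y : Fin k → ℤ)
    (hneb : (OmegaAvoidS k T₀ T₁ x y gb S).Nonempty)
    (hnet : (OmegaAvoidS k T₀ T₁ x y gt S).Nonempty) :
    ∃ (Ω : Type) (mΩ : MeasurableSpace Ω) (P : Measure Ω),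
      IsProbabilityMeasure P ∧
      ∃ Lt Lb : Ω → (Fin k → ℤ → ℤ),
        (∀ᵐ ω ∂P, Lt ω ∈ OmegaAvoidS k T₀ T₁ x y gt S) ∧
        (∀ q ∈ OmegaAvoidS k T₀ T₁ x y gt S,
          P {ω | Lt ω = q} = ((OmegaAvoidS k T₀ T₁ x y gt S).ncard : ℝ≥0∞)⁻¹) ∧
        (∀ᵐ ω ∂P, Lb ω ∈ OmegaAvoidS k T₀ T₁ x y gb S) ∧
        (∀ q ∈ OmegaAvoidS k T₀ T₁ x y gb S,
          P {ω | Lb ω = q} = ((OmegaAvoidS k T₀ T₁ x y gb S).ncard : ℝ≥0∞)⁻¹) ∧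
        (∀ᵐ ω ∂P, ∀ (i : Fin k) (r : ℤ), T₀ ≤ r → r ≤ T₁ → Lb ω i r ≤ Lt ω i r) := by
  set A := OmegaAvoidS k T₀ T₁ x y gt S
  set B := OmegaAvoidS k T₀ T₁ x y gb S
  have hA : A.Finite := omegaAvoidS_finite
  have hB : B.Finite := omegaAvoidS_finite
  have hAB : A ⊆ B := antitone_omegaAvoidS hg
  obtain ⟨Ω, mΩ, P, hP, Lt, Lb, hLt, hLt_unif, hLb, hLb_unif, hle⟩ :=
    exists_monotone_coupling_uniformOn (hA.toFinset_nonempty.2 hnet) (hB.toFinset_nonempty.2 hneb)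
      (fun a ha b hb => hA.mem_toFinset.2 <|
        sup_mem_omegaAvoidS (hA.mem_toFinset.1 ha) (hB.mem_toFinset.1 hb))
      (fun a ha b hb => hB.mem_toFinset.2 <|
        inf_mem_omegaAvoidS (hAB (hA.mem_toFinset.1 ha)) (hB.mem_toFinset.1 hb))
  refine ⟨Ω, mΩ, P, hP, Lt, Lb, ae_of_all _ fun ω => hA.mem_toFinset.1 (hLt ω), fun q hq => ?_,
    ae_of_all _ fun ω => hB.mem_toFinset.1 (hLb ω), fun q hq => ?_,
    ae_of_all _ fun ω i r _ _ => hle ω i r⟩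
  · rw [Set.ncard_eq_toFinset_card _ hA]
    exact hLt_unif q (hA.mem_toFinset.2 hq)
  · rw [Set.ncard_eq_toFinset_card _ hB]
    exact hLb_unif q (hB.mem_toFinset.2 hq)

/-- monotone coupling of avoiding Bernoulli line ensembles in the lower
boundary function `g^b ≤ g^t`. -/
theorem stmt14 (k : ℕ) (T₀ T₁ : ℤ) (hT : T₀ < T₁) (S : Set ℤ)
    (hS : S ⊆ Set.Icc T₀ T₁)
    (gt gb : ℤ → WithBot ℤ) (hg : ∀ r, gb r ≤ gt r)
    (x y : Fin k → ℤ) (hx : Antitone x) (hy : Antitone y)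
    (hneb : (OmegaAvoidS k T₀ T₁ x y gb S).Nonempty)
    (hnet : (OmegaAvoidS k T₀ T₁ x y gt S).Nonempty) :
    ∃ (Ω : Type) (mΩ : MeasurableSpace Ω) (P : Measure Ω),
      IsProbabilityMeasure P ∧
      ∃ Lt Lb : Ω → (Fin k → ℤ → ℤ),
        (∀ᵐ ω ∂P, Lt ω ∈ OmegaAvoidS k T₀ T₁ x y gt S) ∧
        (∀ q ∈ OmegaAvoidS k T₀ T₁ x y gt S,
          P {ω | Lt ω = q} = ((OmegaAvoidS k T₀ T₁ x y gt S).ncard : ℝ≥0∞)⁻¹) ∧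
        (∀ᵐ ω ∂P, Lb ω ∈ OmegaAvoidS k T₀ T₁ x y gb S) ∧
        (∀ q ∈ OmegaAvoidS k T₀ T₁ x y gb S,
          P {ω | Lb ω = q} = ((OmegaAvoidS k T₀ T₁ x y gb S).ncard : ℝ≥0∞)⁻¹) ∧
        (∀ᵐ ω ∂P, ∀ (i : Fin k) (r : ℤ), T₀ ≤ r → r ≤ T₁ → Lb ω i r ≤ Lt ω i r) :=
  stmt14_general k T₀ T₁ S gt gb hg x y hneb hnet
end
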